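/- Let D₊, D₋ > 0, λ > 0, α = 1/√D₋ + 1/√D₊, Erfc(x) = (2/√π)∫_x^∞ e^{−u²} du, and define G₊₊(s,s₁,t) = (4πD₊t)^{-1/2}[exp(−(s−s₁)²/(4D₊t)) + exp(−(s+s₁)²/(4D₊t))] − (λ/D₊)·exp(λα(s+s₁)/√D₊ + λ²α²t)·Erfc((s+s₁)/(2√(D₊t)) + λα√t). Then for all s, s₁ > 0 with s ≠ s₁, the Varadhan short-time bound holds: lim_{t→0⁺} t · ln G₊₊(s, s₁, t) = −(s − s₁)²/(4D₊). -/

import Mathlib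

/-!
For `0 < t < (s + s₁) / (4λ)` the Green function is squeezed between `K(s - s₁)` and
`2 K(s - s₁)`, where `K` is the free heat kernel of `D₊` at time `t`: the image term `K(s + s₁)` is
at most `K(s - s₁)`, and the Mills-ratio bound `Erfc z ≤ e^{-z²} / (√π z)` shows that the
interface correction is at most `(4λt / (s + s₁)) K(s + s₁)`. Since `t log 2 → 0`, `G₊₊` has the
Varadhan limit of `K(s - s₁)`, which is read off from its explicit logarithm.
-/

open MeasureTheory Set Filter Topology Real

lemma tendsto_mul_log_of_le_of_le_const_mul {f g : ℝ → ℝ} {c L : ℝ}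
    (hfg : ∀ᶠ t in 𝓝[>] 0, 0 < f t ∧ f t ≤ g t ∧ g t ≤ c * f t)
    (hf : Tendsto (fun t ↦ t * log (f t)) (𝓝[>] 0) (𝓝 L)) :
    Tendsto (fun t ↦ t * log (g t)) (𝓝[>] 0) (𝓝 L) := by
  have hid : Tendsto (fun t : ℝ ↦ t) (𝓝[>] 0) (𝓝 0) := nhdsWithin_le_nhds
  have hcf : Tendsto (fun t ↦ t * log (c * f t)) (𝓝[>] 0) (𝓝 L) := by
    have hlim := (hid.mul_const (log c)).add hf
    rw [zero_mul, zero_add] at hlim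
    refine hlim.congr' ?_
    filter_upwards [hfg] with t ⟨hf0, hle, hge⟩
    have hc : c ≠ 0 := by rintro rfl; linarith
    rw [log_mul hc hf0.ne']
    ring
  refine tendsto_of_tendsto_of_tendsto_of_le_of_le' hf hcf ?_ ?_ <;>
    filter_upwards [hfg, self_mem_nhdsWithin] with t ⟨hf0, hle, hge⟩ (ht : 0 < t) <;>
    gcongr
  · exact hf0.trans_le hle

lemma integral_Ioi_exp_neg_sq_le {z : ℝ} (hz : 0 < z) :
    ∫ u in Ioi z, exp (-u ^ 2) ≤ exp (-z ^ 2) / (2 * z) := by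
  have hderiv : ∀ u ∈ Ici z, HasDerivAt (fun v ↦ -exp (-v ^ 2) / (2 * z))
      (u * exp (-u ^ 2) / z) u := fun u _ ↦ by
    refine (((hasDerivAt_pow 2 u).fun_neg.exp).fun_neg.div_const (2 * z)).congr_deriv ?_
    field_simp
    ring
  have hnonneg : ∀ u ∈ Ioi z, 0 ≤ u * exp (-u ^ 2) / z := fun u hu ↦ by
    have : 0 < u := hz.trans hu
    positivity
  have hlim : Tendsto (fun v ↦ -exp (-v ^ 2) / (2 * z)) atTop (𝓝 0) := by
    have := (tendsto_exp_atBot.comp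
      (tendsto_neg_atBot_iff.mpr (tendsto_pow_atTop two_ne_zero))).neg.div_const (2 * z)
    simpa using this
  calc ∫ u in Ioi z, exp (-u ^ 2) ≤ ∫ u in Ioi z, u * exp (-u ^ 2) / z := by
        refine setIntegral_mono_on ?_ (integrableOn_Ioi_deriv_of_nonneg' hderiv hnonneg hlim)
          measurableSet_Ioi fun u hu ↦ ?_
        · simpa using (integrable_exp_neg_mul_sq one_pos).integrableOn
        · rw [le_div_iff₀ hz, mul_comm]
          exact mul_le_mul_of_nonneg_right hu.le (exp_nonneg _)
    _ = exp (-z ^ 2) / (2 * z) := by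
        rw [integral_Ioi_of_hasDerivAt_of_nonneg' hderiv hnonneg hlim]
        ring

noncomputable def erfc (x : ℝ) : ℝ :=
  2 / √π * ∫ u in Ioi x, exp (-u ^ 2)

lemma erfc_nonneg (x : ℝ) : 0 ≤ erfc x := by
  unfold erfc
  positivity

lemma exp_mul_erfc_add_le {x b : ℝ} (hx : 0 < x) (hb : 0 ≤ b) :
    exp (2 * x * b + b ^ 2) * erfc (x + b) ≤ exp (-x ^ 2) / (√π * x) :=
  calc exp (2 * x * b + b ^ 2) * erfc (x + b)
      ≤ exp (2 * x * b + b ^ 2) * (2 / √π * (exp (-(x + b) ^ 2) / (2 * (x + b)))) := by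
        unfold erfc
        gcongr
        exact integral_Ioi_exp_neg_sq_le (by positivity)
    _ = exp (-x ^ 2) / (√π * (x + b)) := by
        rw [show 2 * x * b + b ^ 2 = -x ^ 2 - -(x + b) ^ 2 by ring, exp_sub]
        field_simp
    _ ≤ exp (-x ^ 2) / (√π * x) := by
        gcongr
        linarith

noncomputable def heatKernel (D t x : ℝ) : ℝ :=
  (4 * π * D * t) ^ (-(1 : ℝ) / 2) * exp (-x ^ 2 / (4 * D * t))

lemma heatKernel_pos {D t : ℝ} (hD : 0 < D) (ht : 0 < t) (x : ℝ) : 0 < heatKernel D t x := by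
  unfold heatKernel
  positivity

lemma heatKernel_le_of_sq_le {D t x y : ℝ} (hD : 0 < D) (ht : 0 < t) (hxy : x ^ 2 ≤ y ^ 2) :
    heatKernel D t y ≤ heatKernel D t x := by
  unfold heatKernel
  gcongr

lemma mul_log_heatKernel {D t : ℝ} (hD : 0 < D) (ht : 0 < t) (x : ℝ) :
    t * log (heatKernel D t x) = -(t * log (4 * π * D) + t * log t) / 2 - x ^ 2 / (4 * D) := by
  rw [heatKernel, log_mul (by positivity) (exp_ne_zero _), log_exp, log_rpow (by positivity),
    log_mul (by positivity) ht.ne']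
  field_simp
  ring

lemma tendsto_mul_log_heatKernel {D : ℝ} (hD : 0 < D) (x : ℝ) :
    Tendsto (fun t ↦ t * log (heatKernel D t x)) (𝓝[>] 0) (𝓝 (-x ^ 2 / (4 * D))) := by
  have hid : Tendsto (fun t : ℝ ↦ t) (𝓝[>] 0) (𝓝 0) := nhdsWithin_le_nhds
  have hlog : Tendsto (fun t ↦ t * log t) (𝓝[>] 0) (𝓝 0) := by
    simpa [mul_comm] using tendsto_log_mul_rpow_nhdsGT_zero one_pos
  have hlim := ((hid.mul_const (log (4 * π * D))).add hlog).neg.div_const 2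
    |>.sub_const (x ^ 2 / (4 * D))
  rw [show -(0 * log (4 * π * D) + 0) / 2 - x ^ 2 / (4 * D) = -x ^ 2 / (4 * D) by ring] at hlim
  refine hlim.congr' ?_
  filter_upwards [self_mem_nhdsWithin] with t ht
  exact (mul_log_heatKernel hD ht x).symm

lemma heatKernel_eq_exp_div {D t : ℝ} (hD : 0 < D) (ht : 0 < t) (x : ℝ) :
    heatKernel D t x = exp (-(x / (2 * √(D * t))) ^ 2) / (2 * √π * √(D * t)) := by
  have hDt : 0 < D * t := by positivity
  rw [heatKernel, show (-(1 : ℝ) / 2) = -(1 / 2) by norm_num, rpow_neg (by positivity),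
    ← sqrt_eq_rpow, show 4 * π * D * t = 2 ^ 2 * π * (D * t) by ring, sqrt_mul (by positivity),
    sqrt_mul (by positivity), sqrt_sq zero_le_two, div_pow, mul_pow, sq_sqrt hDt.le]
  field_simp
  ring_nf

lemma exp_mul_erfc_le_heatKernel {D t σ β : ℝ} (hD : 0 < D) (ht : 0 < t) (hσ : 0 < σ)
    (hβ : 0 ≤ β) :
    exp (β * σ / √D + β ^ 2 * t) * erfc (σ / (2 * √(D * t)) + β * √t) ≤
      4 * D * t / σ * heatKernel D t σ := by
  set x := σ / (2 * √(D * t)) with hx_def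
  have hx : 0 < x := by positivity
  have hexp : β * σ / √D + β ^ 2 * t = 2 * x * (β * √t) + (β * √t) ^ 2 := by
    have : 0 < √t := sqrt_pos.mpr ht
    have : 0 < √D := sqrt_pos.mpr hD
    rw [hx_def, sqrt_mul hD.le t, mul_pow, sq_sqrt ht.le]
    field_simp
  calc exp (β * σ / √D + β ^ 2 * t) * erfc (x + β * √t)
      ≤ exp (-x ^ 2) / (√π * x) := hexp ▸ exp_mul_erfc_add_le hx (by positivity)
    _ = 4 * D * t / σ * heatKernel D t σ := by
        have hr2 : √(D * t) ^ 2 = D * t := sq_sqrt (by positivity)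
        rw [heatKernel_eq_exp_div hD ht, hx_def]
        field_simp
        linear_combination 4 * hr2

/-- The paper's `G₊₊` with `κ = λ` and `β = λα`. -/
noncomputable def sameSideGreen (D κ β s s₁ t : ℝ) : ℝ :=
  heatKernel D t (s - s₁) + heatKernel D t (s + s₁) -
    κ / D * (exp (β * (s + s₁) / √D + β ^ 2 * t) * erfc ((s + s₁) / (2 * √(D * t)) + β * √t))

lemma heatKernel_le_sameSideGreen_le_two_mul {D κ β s s₁ t : ℝ} (hD : 0 < D) (hκ : 0 ≤ κ)
    (hβ : 0 ≤ β) (hs : 0 < s) (hs₁ : 0 < s₁) (ht : 0 < t) (htκ : 4 * κ * t ≤ s + s₁) :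
    heatKernel D t (s - s₁) ≤ sameSideGreen D κ β s s₁ t ∧
      sameSideGreen D κ β s s₁ t ≤ 2 * heatKernel D t (s - s₁) := by
  have hσ : 0 < s + s₁ := by positivity
  set C := exp (β * (s + s₁) / √D + β ^ 2 * t) * erfc ((s + s₁) / (2 * √(D * t)) + β * √t)
  have hC : 0 ≤ C := mul_nonneg (exp_pos _).le (erfc_nonneg _)
  have hcorr : κ / D * C ≤ heatKernel D t (s + s₁) :=
    calc κ / D * C ≤ κ / D * (4 * D * t / (s + s₁) * heatKernel D t (s + s₁)) := by
          gcongr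
          exact exp_mul_erfc_le_heatKernel hD ht hσ hβ
      _ = 4 * κ * t / (s + s₁) * heatKernel D t (s + s₁) := by
          field_simp
      _ ≤ heatKernel D t (s + s₁) :=
          mul_le_of_le_one_left (heatKernel_pos hD ht _).le ((div_le_one hσ).mpr htκ)
  have hfar : heatKernel D t (s + s₁) ≤ heatKernel D t (s - s₁) :=
    heatKernel_le_of_sq_le hD ht (by nlinarith)
  have hcorr0 : 0 ≤ κ / D * C := by positivity
  constructor <;> unfold sameSideGreen <;> linarith

theorem varadhan_bound_finite_lambda_same_side_general
    (Dp Dm lam α : ℝ) (hDp : 0 < Dp) (hlam : 0 < lam)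
    (hα : α = 1 / Real.sqrt Dm + 1 / Real.sqrt Dp)
    (Erfc : ℝ → ℝ)
    (hErfc : ∀ x, Erfc x = (2 / Real.sqrt Real.pi) * ∫ u in Set.Ioi x, Real.exp (-u ^ 2))
    (Gpp : ℝ → ℝ → ℝ → ℝ)
    (hGpp : ∀ s s₁ t, Gpp s s₁ t = (4 * Real.pi * Dp * t) ^ (-(1 : ℝ) / 2) *
        (Real.exp (-(s - s₁) ^ 2 / (4 * Dp * t)) + Real.exp (-(s + s₁) ^ 2 / (4 * Dp * t))) -
        (lam / Dp) * Real.exp (lam * α * (s + s₁) / Real.sqrt Dp + lam ^ 2 * α ^ 2 * t) *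
          Erfc ((s + s₁) / (2 * Real.sqrt (Dp * t)) + lam * α * Real.sqrt t))
    (s s₁ : ℝ) (hs : 0 < s) (hs₁ : 0 < s₁) :
    Tendsto (fun t => t * Real.log (Gpp s s₁ t)) (nhdsWithin 0 (Set.Ioi 0))
      (nhds (-(s - s₁) ^ 2 / (4 * Dp))) := by
  obtain rfl : Erfc = erfc := funext hErfc
  have hG : Gpp s s₁ = sameSideGreen Dp lam (lam * α) s s₁ := by
    funext t
    rw [hGpp, sameSideGreen, heatKernel, heatKernel, mul_pow]
    ring
  have hβ : 0 ≤ lam * α := by rw [hα]; positivity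
  rw [hG]
  refine tendsto_mul_log_of_le_of_le_const_mul (c := 2) ?_ (tendsto_mul_log_heatKernel hDp _)
  filter_upwards [Ioo_mem_nhdsGT (show 0 < (s + s₁) / (4 * lam) by positivity)] with t ⟨ht, htlam⟩
  rw [lt_div_iff₀ (by positivity), mul_comm] at htlam
  exact ⟨heatKernel_pos hDp ht _,
    heatKernel_le_sameSideGreen_le_two_mul hDp hlam.le hβ hs hs₁ ht (by linarith)⟩

/-- Varadhan short-time bound for the 'same side' component of the finite-`λ` transmission
Green function: `lim_{t→0⁺} t · ln G₊₊(s, s₁, t) = −(s − s₁)²/(4D₊)` for `s, s₁ > 0`,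
`s ≠ s₁`. -/
theorem varadhan_bound_finite_lambda_same_side
    (Dp Dm lam α : ℝ) (hDp : 0 < Dp) (hDm : 0 < Dm) (hlam : 0 < lam)
    (hα : α = 1 / Real.sqrt Dm + 1 / Real.sqrt Dp)
    (Erfc : ℝ → ℝ)
    (hErfc : ∀ x, Erfc x = (2 / Real.sqrt Real.pi) * ∫ u in Set.Ioi x, Real.exp (-u ^ 2))
    (Gpp : ℝ → ℝ → ℝ → ℝ)
    (hGpp : ∀ s s₁ t, Gpp s s₁ t = (4 * Real.pi * Dp * t) ^ (-(1 : ℝ) / 2) *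
        (Real.exp (-(s - s₁) ^ 2 / (4 * Dp * t)) + Real.exp (-(s + s₁) ^ 2 / (4 * Dp * t))) -
        (lam / Dp) * Real.exp (lam * α * (s + s₁) / Real.sqrt Dp + lam ^ 2 * α ^ 2 * t) *
          Erfc ((s + s₁) / (2 * Real.sqrt (Dp * t)) + lam * α * Real.sqrt t))
    (s s₁ : ℝ) (hs : 0 < s) (hs₁ : 0 < s₁) (hne : s ≠ s₁) :
    Tendsto (fun t => t * Real.log (Gpp s s₁ t)) (nhdsWithin 0 (Set.Ioi 0))
      (nhds (-(s - s₁) ^ 2 / (4 * Dp))) :=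
  varadhan_bound_finite_lambda_same_side_general Dp Dm lam α hDp hlam hα Erfc hErfc Gpp hGpp s s₁ hs
    hs₁
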